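/- Let X be a regular Hausdorff topological space and let Z ⊆ X be a scattered subspace, i.e., every nonempty subset C ⊆ Z contains a point that is isolated in C (in the subspace topology of C). Let Y = (X ∖ Z) ⊕ Z_d be the topological sum of the subspace X ∖ Z of X and the set Z endowed with the discrete topology. Then the natural bijection f : X → Y (which is the identity on underlying points) is a weak homeomorphism; moreover, its inverse f⁻¹ : Y → X is continuous. -/

import Mathlib

open Set Function Topology

/-- A map `f : X → Y` is weakly discontinuous if every nonempty subset `A ⊆ X`
contains a nonempty subset `U`, open in the subspace topology of `A`, on which
`f` restricts to a continuous map. -/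
def WeaklyDiscontinuous {X Y : Type*} [TopologicalSpace X] [TopologicalSpace Y]
    (f : X → Y) : Prop :=
  ∀ A : Set X, A.Nonempty → ∃ U : Set X, U ⊆ A ∧ U.Nonempty ∧
    (∃ V : Set X, IsOpen V ∧ U = A ∩ V) ∧ ContinuousOn f U

/-- Topological spaces `X` and `Y` are weakly homeomorphic if there is a bijection
`f : X → Y` such that both `f` and its inverse are weakly discontinuous. -/
def WeaklyHomeomorphic (X : Type*) (Y : Type*) [TopologicalSpace X] [TopologicalSpace Y] :
    Prop :=
  ∃ (f : X → Y) (g : Y → X), Function.LeftInverse g f ∧ Function.RightInverse g f ∧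
    WeaklyDiscontinuous f ∧ WeaklyDiscontinuous g

universe u

/-- A copy of the subtype `↥Z` which will carry the discrete topology. -/
def DiscreteCopy {X : Type u} (Z : Set X) : Type u := ↥Z

instance {X : Type u} (Z : Set X) : TopologicalSpace (DiscreteCopy Z) := ⊥

/-- The canonical point of `DiscreteCopy Z` associated to `x ∈ Z`. -/
def DiscreteCopy.mk {X : Type u} {Z : Set X} (x : X) (hx : x ∈ Z) : DiscreteCopy Z :=
  ⟨x, hx⟩

/-!
Away from `Z` the natural bijection `X → (X ∖ Z) ⊕ Z_d` is continuous, and its inverse is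
continuous everywhere. Given a nonempty `A ⊆ X`, either some relatively open piece of `A` misses
`Z`, and the bijection is continuous there, or `A ∩ Z` is dense in `A`. In the latter case an
isolated point `x` of `A ∩ Z`, cut out by an open `V`, is isolated in `A` itself:
`A ∩ V ⊆ closure (A ∩ Z ∩ V) = closure {x} = {x}` because points are closed.
-/

variable {X : Type*}

namespace DiscreteCopy

variable {Z : Set X}

open Classical in
noncomputable def sumEquiv (Z : Set X) : ↥Zᶜ ⊕ DiscreteCopy Z ≃ X :=
  (Equiv.sumComm _ _).trans (Equiv.Set.sumCompl Z)

open Classical in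
theorem sumEquiv_symm_apply_of_mem {x : X} (hx : x ∈ Z) :
    (sumEquiv Z).symm x = Sum.inr (DiscreteCopy.mk x hx) := by
  change Sum.swap ((Equiv.Set.sumCompl Z).symm x) = _
  rw [Equiv.Set.sumCompl_symm_apply_of_mem hx]
  rfl

open Classical in
theorem sumEquiv_symm_apply_of_notMem {x : X} (hx : x ∉ Z) :
    (sumEquiv Z).symm x = Sum.inl ⟨x, hx⟩ := by
  change Sum.swap ((Equiv.Set.sumCompl Z).symm x) = _
  rw [Equiv.Set.sumCompl_symm_apply_of_notMem hx]
  rfl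

end DiscreteCopy

variable {Y : Type*} [TopologicalSpace X] [TopologicalSpace Y]

def IsScattered (Z : Set X) : Prop :=
  ∀ C : Set X, C ⊆ Z → C.Nonempty → ∃ x ∈ C, ∃ V : Set X, IsOpen V ∧ V ∩ C = {x}

theorem Continuous.weaklyDiscontinuous {f : X → Y} (hf : Continuous f) :
    WeaklyDiscontinuous f :=
  fun A hA ↦ ⟨A, subset_rfl, hA, ⟨univ, isOpen_univ, (inter_univ A).symm⟩, hf.continuousOn⟩

theorem inter_eq_singleton_of_subset_closure [T1Space X] {S A V : Set X} {x : X}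
    (hSA : S ⊆ A) (hAS : A ⊆ closure S) (hV : IsOpen V) (hVS : V ∩ S = {x}) :
    A ∩ V = {x} := by
  have hx : x ∈ V ∩ S := hVS ▸ mem_singleton x
  refine Subset.antisymm ?_ (singleton_subset_iff.mpr ⟨hSA hx.2, hx.1⟩)
  calc A ∩ V ⊆ V ∩ closure S := fun y hy ↦ ⟨hy.2, hAS hy.1⟩
    _ ⊆ closure (V ∩ S) := hV.inter_closure
    _ = {x} := by rw [hVS, closure_singleton]

theorem IsScattered.weaklyDiscontinuous_of_continuousOn_compl [T1Space X] {Z : Set X}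
    (hZ : IsScattered Z) {f : X → Y} (hf : ContinuousOn f Zᶜ) : WeaklyDiscontinuous f := by
  intro A hA
  by_cases hdense : A ⊆ closure (A ∩ Z)
  · have hAZ : (A ∩ Z).Nonempty := closure_nonempty_iff.mp (hA.mono hdense)
    obtain ⟨x, -, V, hV, hVx⟩ := hZ (A ∩ Z) inter_subset_right hAZ
    have hAV : A ∩ V = {x} := inter_eq_singleton_of_subset_closure inter_subset_left hdense hV hVx
    exact ⟨{x}, hAV ▸ inter_subset_left, singleton_nonempty x, ⟨V, hV, hAV.symm⟩,
      continuousOn_singleton f x⟩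
  · obtain ⟨a, haA, ha⟩ := not_subset.mp hdense
    refine ⟨A ∩ (closure (A ∩ Z))ᶜ, inter_subset_left, ⟨a, haA, ha⟩,
      ⟨_, isClosed_closure.isOpen_compl, rfl⟩, hf.mono ?_⟩
    rintro y ⟨hyA, hy⟩ hyZ
    exact hy (subset_closure ⟨hyA, hyZ⟩)

namespace DiscreteCopy

variable {Z : Set X}

theorem continuous_sumEquiv : Continuous (sumEquiv Z) :=
  continuous_sum_dom.mpr ⟨continuous_subtype_val, continuous_bot⟩

theorem continuousOn_sumEquiv_symm_compl : ContinuousOn (sumEquiv Z).symm Zᶜ := by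
  rw [continuousOn_iff_continuous_domRestrict]
  convert continuous_inl (X := ↥Zᶜ) (Y := DiscreteCopy Z)
  ext ⟨x, hx⟩
  exact sumEquiv_symm_apply_of_notMem hx

end DiscreteCopy

theorem weakHomeomorphism_scattered_discretization_general
    {X : Type u} [TopologicalSpace X] [T2Space X] (Z : Set X)
    (hZ : ∀ C : Set X, C ⊆ Z → C.Nonempty →
      ∃ x ∈ C, ∃ V : Set X, IsOpen V ∧ V ∩ C = {x}) :
    ∃ f : X → (↥(Zᶜ) ⊕ DiscreteCopy Z),
      (∀ (x : X) (hx : x ∈ Z), f x = Sum.inr (DiscreteCopy.mk x hx)) ∧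
      (∀ (x : X) (hx : x ∉ Z), f x = Sum.inl ⟨x, hx⟩) ∧
      Function.Bijective f ∧ WeaklyDiscontinuous f ∧
      ∃ g : (↥(Zᶜ) ⊕ DiscreteCopy Z) → X,
        Function.LeftInverse g f ∧ Function.RightInverse g f ∧
        Continuous g ∧ WeaklyDiscontinuous g :=
  let e := DiscreteCopy.sumEquiv Z
  ⟨e.symm, fun _ ↦ DiscreteCopy.sumEquiv_symm_apply_of_mem,
    fun _ ↦ DiscreteCopy.sumEquiv_symm_apply_of_notMem, e.symm.bijective,
    IsScattered.weaklyDiscontinuous_of_continuousOn_compl hZ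
      DiscreteCopy.continuousOn_sumEquiv_symm_compl,
    e, e.apply_symm_apply, e.symm_apply_apply, DiscreteCopy.continuous_sumEquiv,
    DiscreteCopy.continuous_sumEquiv.weaklyDiscontinuous⟩

theorem weakHomeomorphism_scattered_discretization
    {X : Type u} [TopologicalSpace X] [T2Space X] [RegularSpace X] (Z : Set X)
    (hZ : ∀ C : Set X, C ⊆ Z → C.Nonempty →
      ∃ x ∈ C, ∃ V : Set X, IsOpen V ∧ V ∩ C = {x}) :
    ∃ f : X → (↥(Zᶜ) ⊕ DiscreteCopy Z),
      (∀ (x : X) (hx : x ∈ Z), f x = Sum.inr (DiscreteCopy.mk x hx)) ∧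
      (∀ (x : X) (hx : x ∉ Z), f x = Sum.inl ⟨x, hx⟩) ∧
      Function.Bijective f ∧ WeaklyDiscontinuous f ∧
      ∃ g : (↥(Zᶜ) ⊕ DiscreteCopy Z) → X,
        Function.LeftInverse g f ∧ Function.RightInverse g f ∧
        Continuous g ∧ WeaklyDiscontinuous g :=
  weakHomeomorphism_scattered_discretization_general Z hZ
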